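/- If r(u,v) = (u cos θ (cos v, sin v) + γ(v), u sin θ) with γ smooth and the tangent vectors r_u, r_v are orthogonal at every point, then γ'(v) is parallel to (-sin v, cos v), i.e. there exists a function α with γ'(v) = cos θ·α(v)·(-sin v, cos v) (assuming cos θ ≠ 0). -/

import Mathlib

/-!
Along the curve `u = 0` we have `r_u = (cos θ cos v, cos θ sin v, sin θ)` and
`r_v = (γ₁'(v), γ₂'(v), 0)`, so `⟪r_u, r_v⟫ = cos θ · ⟪(cos v, sin v), γ'(v)⟫`.
Since `cos θ ≠ 0`, `γ'(v)` is orthogonal to the unit vector `(cos v, sin v)`, hence a multiple of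
`(-sin v, cos v)`.
-/

open Real

theorem hasDerivAt_piLp {𝕜 ι : Type*} {E : ι → Type*} [NontriviallyNormedField 𝕜]
    [∀ i, NormedAddCommGroup (E i)] [∀ i, NormedSpace 𝕜 (E i)] [Fintype ι]
    (p : ENNReal) [Fact (1 ≤ p)] {f : 𝕜 → PiLp p E} {f' : PiLp p E} {x : 𝕜} :
    HasDerivAt f f' x ↔ ∀ i, HasDerivAt (fun t => f t i) (f' i) x := by
  rw [← hasDerivWithinAt_univ, hasDerivWithinAt_iff_hasFDerivWithinAt, hasFDerivWithinAt_piLp]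
  simp only [hasDerivWithinAt_univ.symm, hasDerivWithinAt_iff_hasFDerivWithinAt]
  rfl

theorem exists_eq_mul_neg_sin_and_eq_mul_cos {v a b : ℝ} (h : cos v * a + sin v * b = 0) :
    ∃ c, a = c * -sin v ∧ b = c * cos v :=
  ⟨-sin v * a + cos v * b, by linear_combination cos v * h - a * sin_sq_add_cos_sq v,
    by linear_combination sin v * h - b * sin_sq_add_cos_sq v⟩

/-- If `r(u,v) = (u cos θ (cos v, sin v) + γ(v), u sin θ)` with `γ` smooth
and `r_u ⊥ r_v` at every point (and `cos θ ≠ 0`), then `γ'` is parallel to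
`(-sin v, cos v)`: there is a function `α` with `γ'(v) = cos θ · α(v) · (-sin v, cos v)`. -/
theorem orthogonality_forces_gamma
    (θ : ℝ) (hcos : Real.cos θ ≠ 0)
    (γ₁ γ₂ : ℝ → ℝ) (hγ₁ : Differentiable ℝ γ₁) (hγ₂ : Differentiable ℝ γ₂)
    (r : ℝ → ℝ → EuclideanSpace ℝ (Fin 3))
    (hr : ∀ u v, r u v =
      ![u * Real.cos θ * Real.cos v + γ₁ v, u * Real.cos θ * Real.sin v + γ₂ v,
        u * Real.sin θ])
    (horth : ∀ u v, (inner ℝ (deriv (fun t => r t v) u) (deriv (fun t => r u t) v) : ℝ) = 0) :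
    ∃ α : ℝ → ℝ, ∀ v, deriv γ₁ v = Real.cos θ * α v * (-Real.sin v) ∧
      deriv γ₂ v = Real.cos θ * α v * (Real.cos v) := by
  have r_u : ∀ v, HasDerivAt (fun t => r t v) !₂[cos θ * cos v, cos θ * sin v, sin θ] 0 :=
      fun v => by
    refine (hasDerivAt_piLp 2).2 fun i => ?_
    fin_cases i <;> simp only [hr]
    · simpa using (((hasDerivAt_id (0 : ℝ)).mul_const (cos θ)).mul_const (cos v)).add_const (γ₁ v)
    · simpa using (((hasDerivAt_id (0 : ℝ)).mul_const (cos θ)).mul_const (sin v)).add_const (γ₂ v)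
    · simpa using (hasDerivAt_id (0 : ℝ)).mul_const (sin θ)
  have r_v : ∀ v, HasDerivAt (fun t => r 0 t) !₂[deriv γ₁ v, deriv γ₂ v, 0] v := fun v => by
    refine (hasDerivAt_piLp 2).2 fun i => ?_
    fin_cases i <;> simp [hr, hγ₁ v, hγ₂ v, hasDerivAt_const]
  have gamma_deriv_perp : ∀ v, cos v * deriv γ₁ v + sin v * deriv γ₂ v = 0 := fun v => by
    have h := horth 0 v
    rw [(r_u v).deriv, (r_v v).deriv] at h
    simp only [PiLp.inner_apply, RCLike.inner_apply, ringHom_apply, Fin.sum_univ_three,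
      Matrix.cons_val_zero, Matrix.cons_val_one, Matrix.cons_val, zero_mul, add_zero] at h
    exact mul_left_cancel₀ hcos (by linear_combination h)
  choose c hc using fun v => exists_eq_mul_neg_sin_and_eq_mul_cos (gamma_deriv_perp v)
  refine ⟨fun v => c v / cos θ, fun v => ?_⟩
  field_simp
  simpa [mul_neg] using hc v
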